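/- For the system in ℝ⁵ given by ẋ₁ = u, ẋ₂ = x₂, ẋ₃ = x₄x₅ − x₃, ẋ₄ = x₅ − x₁², ẋ₅ = x₁x₂ − x₂², with f₁ = e₁, L = diag(0,1,−1,0,0) + E₄₅ and quadratic part Φ(x) = (0, 0, x₄x₅, −x₁², x₁x₂ − x₂²), the subspace sequence S₀ = span{e₁}, S_{λ+1} = S_λ + span{Lω, Φ(ω) : ω ∈ S_λ} stabilizes with S₄ = span{e₁, e₄} ≠ ℝ⁵. -/

import Mathlib

/-!
The plane `span {e₁, e₄}` contains `S₀` and is invariant under `L` and `Φ`, so it bounds every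
`S_λ` from above; conversely `Φ e₁ = -e₄` already puts it inside `S₁`. It misses `e₂`.
-/

/-- S₀, S_{λ+1} = S_λ + span{Lω, Φ(ω) : ω ∈ S_λ}. -/
def SseqLPhi {n : ℕ} (L : (Fin n → ℝ) →ₗ[ℝ] (Fin n → ℝ))
    (Φ : (Fin n → ℝ) → (Fin n → ℝ)) (S0 : Submodule ℝ (Fin n → ℝ)) :
    ℕ → Submodule ℝ (Fin n → ℝ)
  | 0 => S0
  | l + 1 => SseqLPhi L Φ S0 l ⊔
      Submodule.span ℝ ((L '' (SseqLPhi L Φ S0 l)) ∪ (Φ '' (SseqLPhi L Φ S0 l)))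

section SseqLPhi

variable {n : ℕ} (L : (Fin n → ℝ) →ₗ[ℝ] (Fin n → ℝ)) (Φ : (Fin n → ℝ) → (Fin n → ℝ))
  (S0 : Submodule ℝ (Fin n → ℝ))

theorem SseqLPhi_monotone : Monotone (SseqLPhi L Φ S0) :=
  monotone_nat_of_le_succ fun _ => le_sup_left

theorem apply_mem_SseqLPhi_succ {l : ℕ} {x : Fin n → ℝ} (hx : x ∈ SseqLPhi L Φ S0 l) :
    Φ x ∈ SseqLPhi L Φ S0 (l + 1) :=
  Submodule.mem_sup_right (Submodule.subset_span (Or.inr ⟨x, hx, rfl⟩))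

theorem SseqLPhi_le_of_invariant {T : Submodule ℝ (Fin n → ℝ)} (hS0 : S0 ≤ T)
    (hLT : ∀ x ∈ T, L x ∈ T) (hΦT : ∀ x ∈ T, Φ x ∈ T) (l : ℕ) : SseqLPhi L Φ S0 l ≤ T := by
  induction l with
  | zero => exact hS0
  | succ l ih =>
    refine sup_le ih (Submodule.span_le.mpr ?_)
    rintro _ (⟨x, hx, rfl⟩ | ⟨x, hx, rfl⟩)
    · exact hLT x (ih hx)
    · exact hΦT x (ih hx)

end SseqLPhi

theorem mem_span_single_zero_three_iff (x : Fin 5 → ℝ) :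
    x ∈ Submodule.span ℝ {(Pi.single 0 1 : Fin 5 → ℝ), (Pi.single 3 1 : Fin 5 → ℝ)} ↔
      x 1 = 0 ∧ x 2 = 0 ∧ x 4 = 0 := by
  rw [Submodule.mem_span_pair]
  constructor
  · rintro ⟨a, b, rfl⟩
    simp
  · rintro ⟨h1, h2, h4⟩
    refine ⟨x 0, x 3, funext fun i => ?_⟩
    fin_cases i <;> simp [h1, h2, h4]

/-- For the 5-dimensional example with L = diag(0,1,−1,0,0)+E₄₅,
Φ(x) = (0,0,x₄x₅,−x₁²,x₁x₂−x₂²), f₁ = e₁: S₄ = span{e₁,e₄} ≠ ℝ⁵. -/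
theorem example_not_accessible
    (L : (Fin 5 → ℝ) →ₗ[ℝ] (Fin 5 → ℝ))
    (hL : ∀ x, L x = ![0, x 1, -x 2, x 4, 0])
    (Φ : (Fin 5 → ℝ) → (Fin 5 → ℝ))
    (hΦ : ∀ x, Φ x = ![0, 0, x 3 * x 4, -(x 0 ^ 2), x 0 * x 1 - x 1 ^ 2]) :
    SseqLPhi L Φ (Submodule.span ℝ {(Pi.single 0 1 : Fin 5 → ℝ)}) 4 =
      Submodule.span ℝ {(Pi.single 0 1 : Fin 5 → ℝ), (Pi.single 3 1 : Fin 5 → ℝ)} ∧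
    SseqLPhi L Φ (Submodule.span ℝ {(Pi.single 0 1 : Fin 5 → ℝ)}) 4 ≠ ⊤ := by
  set e0 : Fin 5 → ℝ := Pi.single 0 1
  set e3 : Fin 5 → ℝ := Pi.single 3 1
  set S := SseqLPhi L Φ (Submodule.span ℝ {e0})
  have hT : ∀ x, x ∈ Submodule.span ℝ {e0, e3} ↔ x 1 = 0 ∧ x 2 = 0 ∧ x 4 = 0 :=
    mem_span_single_zero_three_iff
  have hS0 : Submodule.span ℝ {e0} ≤ Submodule.span ℝ {e0, e3} :=
    Submodule.span_mono (by simp)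
  have hS4 : S 4 = Submodule.span ℝ {e0, e3} := by
    refine le_antisymm (SseqLPhi_le_of_invariant L Φ _ hS0 ?_ ?_ 4) (Submodule.span_le.mpr ?_)
    · simp +contextual [hT, hL]
    · simp +contextual [hT, hΦ]
    have he0 : e0 ∈ S 0 := Submodule.mem_span_singleton_self e0
    have hΦe0 : Φ e0 = -e3 := funext fun i => by fin_cases i <;> simp [hΦ, e0, e3]
    have he3 : e3 ∈ S 1 := by
      simpa [hΦe0] using apply_mem_SseqLPhi_succ L Φ _ he0
    rintro _ (rfl | rfl)
    · exact SseqLPhi_monotone L Φ _ (Nat.zero_le 4) he0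
    · exact SseqLPhi_monotone L Φ _ (by norm_num : 1 ≤ 4) he3
  refine ⟨hS4, fun htop => ?_⟩
  have he1 : (Pi.single 1 1 : Fin 5 → ℝ) ∈ S 4 := htop ▸ Submodule.mem_top
  simp [hS4, hT] at he1
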